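/- arXiv:2210.10193 — 3 statements merged into one kernel-verified Lean document; each statement's English description precedes it below -/
import Mathlib

section
/- For every λ > 0 and every sequence a : ℤ → ℝ, the modulo map commutes with the first-order finite difference in the following sense: 𝓜_λ((Δ(𝓜_λ ∘ a))[k]) = 𝓜_λ((Δa)[k]) for all k ∈ ℤ. -/
/-- The centered modulo map `𝓜_λ(r) = 2λ(⟦r/(2λ) + 1/2⟧ − 1/2)`,
where `⟦x⟧ = x − ⌊x⌋` is the fractional part. -/
noncomputable def centeredModulo (lam r : ℝ) : ℝ :=
  2 * lam * (Int.fract (r / (2 * lam) + 1 / 2) - 1 / 2)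

/-- First-order finite difference: `(Δa)[k] = a[k+1] − a[k]`. -/
def fdiff (a : ℤ → ℝ) : ℤ → ℝ := fun k => a (k + 1) - a k

/-! `𝓜_λ` is `2λ`-periodic and `𝓜_λ(r) - r` is an integer multiple of `2λ`. Hence
`Δ(𝓜_λ ∘ a)[k]` and `(Δa)[k]` differ by an integer multiple of `2λ`, which `𝓜_λ` does not see. -/

theorem Function.Periodic.map_sub_map {α : Type*} [AddCommGroup α] {f : α → α} {c : α}
    (hf : Function.Periodic f c) (hfc : ∀ x, ∃ n : ℤ, f x = x + n • c) (x y : α) :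
    f (f x - f y) = f (x - y) := by
  obtain ⟨m, hm⟩ := hfc x
  obtain ⟨n, hn⟩ := hfc y
  have hshift : f x - f y = (x - y) + (m - n) • c := by
    rw [hm, hn, sub_zsmul]
    abel
  rw [hshift, (hf.zsmul (m - n)) (x - y)]

theorem centeredModulo_periodic (lam : ℝ) : Function.Periodic (centeredModulo lam) (2 * lam) := by
  intro r
  rcases eq_or_ne lam 0 with rfl | hlam
  · simp
  have hshift : (r + 2 * lam) / (2 * lam) + 1 / 2 = (r / (2 * lam) + 1 / 2) + 1 := by
    field_simp
    ring
  rw [centeredModulo, centeredModulo, hshift, Int.fract_add_one]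

theorem centeredModulo_eq_add_zsmul {lam : ℝ} (hlam : lam ≠ 0) (r : ℝ) :
    centeredModulo lam r = r + (-⌊r / (2 * lam) + 1 / 2⌋) • (2 * lam) := by
  rw [centeredModulo, Int.fract, zsmul_eq_mul]
  field_simp
  push_cast
  ring

theorem centeredModulo_comm_fdiff (lam : ℝ) (hlam : 0 < lam) (a : ℤ → ℝ) (k : ℤ) :
    centeredModulo lam (fdiff (fun j => centeredModulo lam (a j)) k) =
      centeredModulo lam (fdiff a k) :=
  (centeredModulo_periodic lam).map_sub_map
    (fun r => ⟨_, centeredModulo_eq_add_zsmul hlam.ne' r⟩) (a (k + 1)) (a k)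
end

section
/- (Noisy unfolding of higher-order differences, generic form) Let λ > 0, L ∈ ℕ with L ≥ 1, and let a, ε : ℤ → ℝ be sequences such that sup_{k ∈ ℤ}|(Δ^L a)[k]| + 2^L · sup_{k ∈ ℤ}|ε[k]| < λ. Then the noisy modulo samples q[k] = 𝓜_λ(a[k]) + ε[k] determine the L-th differences of the noisy unfolded samples exactly: 𝓜_λ((Δ^L q)[k]) = (Δ^L (a + ε))[k] for all k ∈ ℤ. -/
/-!
Write `𝓜_λ(a[k]) = a[k] + e[k]` with `e[k] ∈ 2λℤ`. Since `Δ` is additive and preserves `2λℤ`-valued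
sequences, `Δ^L q = Δ^L (a + ε) + Δ^L e` with `Δ^L e ∈ 2λℤ`, and `𝓜_λ` is `2λ`-periodic. Finally
`|Δ^L (a + ε)| ≤ sup |Δ^L a| + 2^L sup |ε| < λ`, and `𝓜_λ` is the identity on `(-λ, λ)`.
-/

namespace centeredModulo

theorem periodic (lam : ℝ) : Function.Periodic (centeredModulo lam) (2 * lam) := by
  intro r
  rcases eq_or_ne lam 0 with rfl | hlam
  · simp [centeredModulo]
  · have h : (r + 2 * lam) / (2 * lam) + 1 / 2 = (r / (2 * lam) + 1 / 2) + (1 : ℤ) := by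
      field_simp
      push_cast
      ring
    rw [centeredModulo, centeredModulo, h, Int.fract_add_intCast]

theorem add_mem_zmultiples {lam x : ℝ} (hx : x ∈ AddSubgroup.zmultiples (2 * lam)) (r : ℝ) :
    centeredModulo lam (r + x) = centeredModulo lam r := by
  obtain ⟨n, rfl⟩ := AddSubgroup.mem_zmultiples_iff.mp hx
  exact (periodic lam).zsmul n r

theorem sub_self_mem_zmultiples {lam : ℝ} (hlam : lam ≠ 0) (r : ℝ) :
    centeredModulo lam r - r ∈ AddSubgroup.zmultiples (2 * lam) := by
  refine AddSubgroup.mem_zmultiples_iff.mpr ⟨-⌊r / (2 * lam) + 1 / 2⌋, ?_⟩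
  rw [centeredModulo, Int.fract, zsmul_eq_mul]
  field_simp
  push_cast
  ring

theorem eq_self_of_abs_lt {lam r : ℝ} (h : |r| < lam) : centeredModulo lam r = r := by
  have hlam : 0 < lam := by linarith [abs_nonneg r]
  obtain ⟨hlo, hhi⟩ := abs_lt.mp h
  have hfract : Int.fract (r / (2 * lam) + 1 / 2) = r / (2 * lam) + 1 / 2 := by
    refine Int.fract_eq_self.mpr ⟨?_, ?_⟩
    · have : -(1 / 2 : ℝ) ≤ r / (2 * lam) := by
        rw [le_div_iff₀ (by positivity)]
        linarith
      linarith
    · have : r / (2 * lam) < 1 / 2 := by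
        rw [div_lt_iff₀ (by positivity)]
        linarith
      linarith
  rw [centeredModulo, hfract]
  field_simp
  ring

end centeredModulo

theorem fdiff_iterate_add (L : ℕ) (f g : ℤ → ℝ) :
    fdiff^[L] (f + g) = fdiff^[L] f + fdiff^[L] g := by
  induction L with
  | zero => rfl
  | succ n ih =>
    simp only [Function.iterate_succ_apply', ih]
    funext k
    simp only [fdiff, Pi.add_apply]
    ring

theorem fdiff_iterate_mem {S : AddSubgroup ℝ} {f : ℤ → ℝ} (hf : ∀ j, f j ∈ S) (L : ℕ) (k : ℤ) :
    fdiff^[L] f k ∈ S := by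
  induction L generalizing k with
  | zero => exact hf k
  | succ n ih =>
    rw [Function.iterate_succ_apply']
    exact S.sub_mem (ih (k + 1)) (ih k)

theorem abs_fdiff_iterate_le {f : ℤ → ℝ} {C : ℝ} (hf : ∀ j, |f j| ≤ C) (L : ℕ) (k : ℤ) :
    |fdiff^[L] f k| ≤ 2 ^ L * C := by
  induction L generalizing k with
  | zero => simpa using hf k
  | succ n ih =>
    rw [Function.iterate_succ_apply']
    calc |fdiff^[n] f (k + 1) - fdiff^[n] f k|
        ≤ |fdiff^[n] f (k + 1)| + |fdiff^[n] f k| := abs_sub _ _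
      _ ≤ 2 ^ n * C + 2 ^ n * C := add_le_add (ih (k + 1)) (ih k)
      _ = 2 ^ (n + 1) * C := by ring

theorem noisy_unfolding_generic_general (lam : ℝ) (hlam : 0 < lam)
    (L : ℕ) (a ε : ℤ → ℝ)
    (hbddA : BddAbove (Set.range fun k : ℤ => |fdiff^[L] a k|))
    (hbddE : BddAbove (Set.range fun k : ℤ => |ε k|))
    (hsum : (⨆ k : ℤ, |fdiff^[L] a k|) + 2 ^ L * (⨆ k : ℤ, |ε k|) < lam) :
    ∀ k : ℤ, centeredModulo lam
        (fdiff^[L] (fun j : ℤ => centeredModulo lam (a j) + ε j) k) =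
      fdiff^[L] (fun j : ℤ => a j + ε j) k := by
  intro k
  set e : ℤ → ℝ := fun j => centeredModulo lam (a j) - a j
  have hq : (fun j => centeredModulo lam (a j) + ε j) = (a + ε) + e := by
    funext j
    simp only [e, Pi.add_apply]
    ring
  have he : fdiff^[L] e k ∈ AddSubgroup.zmultiples (2 * lam) :=
    fdiff_iterate_mem (fun j => centeredModulo.sub_self_mem_zmultiples hlam.ne' (a j)) L k
  have hsmall : |fdiff^[L] (a + ε) k| < lam := by
    rw [fdiff_iterate_add, Pi.add_apply]
    calc |fdiff^[L] a k + fdiff^[L] ε k| ≤ |fdiff^[L] a k| + |fdiff^[L] ε k| := abs_add_le _ _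
      _ ≤ (⨆ i, |fdiff^[L] a i|) + 2 ^ L * ⨆ i, |ε i| :=
        add_le_add (le_ciSup hbddA k) (abs_fdiff_iterate_le (le_ciSup hbddE) L k)
      _ < lam := hsum
  rw [hq, fdiff_iterate_add, Pi.add_apply, centeredModulo.add_mem_zmultiples he]
  exact centeredModulo.eq_self_of_abs_lt hsmall

/-- Noisy unfolding of higher-order differences, generic form. -/
theorem noisy_unfolding_generic (lam : ℝ) (hlam : 0 < lam)
    (L : ℕ) (hL : 1 ≤ L) (a ε : ℤ → ℝ)
    (hbddA : BddAbove (Set.range fun k : ℤ => |fdiff^[L] a k|))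
    (hbddE : BddAbove (Set.range fun k : ℤ => |ε k|))
    (hsum : (⨆ k : ℤ, |fdiff^[L] a k|) + 2 ^ L * (⨆ k : ℤ, |ε k|) < lam) :
    ∀ k : ℤ, centeredModulo lam
        (fdiff^[L] (fun j : ℤ => centeredModulo lam (a j) + ε j) k) =
      fdiff^[L] (fun j : ℤ => a j + ε j) k :=
  noisy_unfolding_generic_general lam hlam L a ε hbddA hbddE hsum
end

section
/- (SQNR gain of the modulo ADC for a uniform source) Let λ > 0, let N be a positive integer, set β = Nλ and ζ = λ/β = 1/N, let b ∈ ℕ with b ≥ 1, and let X be uniformly distributed on [−β, β). Then the mean squared quantization error of the modulo ADC, which applies the b-bit midrise quantizer of range [−λ, λ) to the folded sample 𝓜_λ(X), satisfies E[(𝓜_λ(X) − 𝒬_{b,λ}(𝓜_λ(X)))²] = (λ²/3)·2^{−2b} = ζ² · (β²/3)·2^{−2b}; consequently the signal-to-quantization-noise ratio satisfies Var(X)/E[(𝓜_λ(X) − 𝒬_{b,λ}(𝓜_λ(X)))²] = 2^{2b}/ζ², i.e. the modulo ADC improves the SQNR of a conventional b-bit ADC of matched range [−β, β) by the factor 1/ζ².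 -/
/-!
Since `2λ` is `2^b` quantizer steps `q = 2λ/2^b`, folding by `𝓜_λ` shifts a sample by a multiple
of `q` and so does not change its midrise quantization error, the `q`-periodic sawtooth
`q (⟦x/q⟧ - 1/2)`. The interval `[-β, β)` consists of exactly `N·2^b` cells of length `q`, on each
of which the squared sawtooth integrates to `q³/12`; hence the mean squared error is
`q²/12 = (λ²/3)·2^{-2b}`, and `ζ = 1/N` turns this into the other two identities.
-/

open MeasureTheory

/-- The `b`-bit midrise quantizer of range `[−λ, λ)`, with step size `q₀ = 2λ/2^b`:
`𝒬_{b,λ}(x) = q₀·(⌊x/q₀⌋ + 1/2)`. -/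
noncomputable def midriseQ (b : ℕ) (lam x : ℝ) : ℝ :=
  (2 * lam / 2 ^ b) * (⌊x / (2 * lam / 2 ^ b)⌋ + 1 / 2)

theorem MeasureTheory.pdf.IsUniform.integral_comp {Ω E F : Type*} [MeasurableSpace Ω]
    [MeasurableSpace E] [NormedAddCommGroup F] [NormedSpace ℝ F]
    {ℙ : Measure Ω} {μ : Measure E} {X : Ω → E} {s : Set E}
    (hns : μ s ≠ 0) (hnt : μ s ≠ ⊤) (hu : pdf.IsUniform X s ℙ μ)
    {f : E → F} (hf : AEStronglyMeasurable f (μ.restrict s)) :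
    ∫ ω, f (X ω) ∂ℙ = (μ s)⁻¹.toReal • ∫ x in s, f x ∂μ := by
  have hf' : AEStronglyMeasurable f (ℙ.map X) := by
    rw [hu]; exact hf.smul_measure _
  rw [← integral_map (hu.aemeasurable hns hnt) hf', hu, ProbabilityTheory.cond,
    integral_smul_measure]

noncomputable def sawtooth (q x : ℝ) : ℝ :=
  q * (Int.fract (x / q) - 1 / 2)

theorem measurable_sawtooth (q : ℝ) : Measurable (sawtooth q) :=
  measurable_const.mul ((measurable_id.div_const q).fract.sub measurable_const)

theorem sawtooth_periodic (q : ℝ) : Function.Periodic (sawtooth q) q := by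
  intro x
  rcases eq_or_ne q 0 with rfl | hq
  · simp [sawtooth]
  · rw [sawtooth, sawtooth, add_div, div_self hq, Int.fract_add_one]

theorem sawtooth_sq_le (q x : ℝ) : sawtooth q x ^ 2 ≤ q ^ 2 / 4 := by
  have h₀ := Int.fract_nonneg (x / q)
  have h₁ := Int.fract_lt_one (x / q)
  have : (Int.fract (x / q) - 1 / 2) ^ 2 ≤ 1 / 4 := by nlinarith
  calc sawtooth q x ^ 2 = q ^ 2 * (Int.fract (x / q) - 1 / 2) ^ 2 := by rw [sawtooth, mul_pow]
    _ ≤ q ^ 2 * (1 / 4) := by gcongr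
    _ = q ^ 2 / 4 := by ring

theorem intervalIntegrable_sawtooth_sq (q a b : ℝ) :
    IntervalIntegrable (fun x => sawtooth q x ^ 2) volume a b :=
  (intervalIntegrable_const (c := q ^ 2 / 4)).mono_fun'
    ((measurable_sawtooth q).pow_const 2).aestronglyMeasurable
    (Filter.Eventually.of_forall fun x =>
      (Real.norm_of_nonneg (sq_nonneg _)).trans_le (sawtooth_sq_le q x))

theorem integral_sawtooth_sq_period {q : ℝ} (hq : 0 < q) :
    ∫ x in 0..q, sawtooth q x ^ 2 = q ^ 3 / 12 := by
  have hlin : Set.EqOn (fun x => sawtooth q x ^ 2) (fun x => (x - q / 2) ^ 2) (Set.Ioo 0 q) := by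
    intro x hx
    have : Int.fract (x / q) = x / q :=
      Int.fract_eq_self.mpr ⟨div_nonneg hx.1.le hq.le, (div_lt_one hq).mpr hx.2⟩
    simp only [sawtooth, this]
    field_simp
  rw [intervalIntegral.integral_congr_Ioo_of_le hq.le hlin,
    intervalIntegral.integral_comp_sub_right (fun x => x ^ 2), integral_pow]
  ring

theorem integral_sawtooth_sq_add_nat_mul {q : ℝ} (hq : 0 < q) (a : ℝ) (n : ℕ) :
    ∫ x in a..a + n * q, sawtooth q x ^ 2 = n * (q ^ 3 / 12) := by
  have hper : Function.Periodic (fun x => sawtooth q x ^ 2) q :=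
    fun x => by simp only [sawtooth_periodic q x]
  have := hper.intervalIntegral_add_zsmul_eq n a (intervalIntegrable_sawtooth_sq q)
  rw [zsmul_eq_mul, zsmul_eq_mul, Int.cast_natCast] at this
  rw [this, hper.intervalIntegral_add_eq a 0, zero_add, integral_sawtooth_sq_period hq]

theorem integral_sawtooth_sq_of_isUniform {Ω : Type*} [MeasurableSpace Ω] {ℙ : Measure Ω}
    {X : Ω → ℝ} {q a : ℝ} (hq : 0 < q) {n : ℕ} (hn : 0 < n)
    (hX : pdf.IsUniform X (Set.Ico a (a + n * q)) ℙ) :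
    ∫ ω, sawtooth q (X ω) ^ 2 ∂ℙ = q ^ 2 / 12 := by
  have hlen : 0 < (n : ℝ) * q := by positivity
  have hvol : volume (Set.Ico a (a + n * q)) = ENNReal.ofReal (n * q) := by
    rw [Real.volume_Ico, add_sub_cancel_left]
  rw [hX.integral_comp (by rw [hvol]; exact (ENNReal.ofReal_pos.mpr hlen).ne')
      (by rw [hvol]; exact ENNReal.ofReal_ne_top)
      ((measurable_sawtooth q).pow_const 2).aestronglyMeasurable,
    setIntegral_congr_set Ico_ae_eq_Ioc, ← intervalIntegral.integral_of_le (by linarith),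
    integral_sawtooth_sq_add_nat_mul hq, hvol, ENNReal.toReal_inv,
    ENNReal.toReal_ofReal hlen.le, smul_eq_mul]
  field_simp

theorem sub_midriseQ (b : ℕ) {lam : ℝ} (hlam : lam ≠ 0) (x : ℝ) :
    x - midriseQ b lam x = sawtooth (2 * lam / 2 ^ b) x := by
  rw [midriseQ, sawtooth, Int.fract]
  field_simp
  ring

theorem centeredModulo_eq_sub {lam : ℝ} (hlam : lam ≠ 0) (x : ℝ) :
    centeredModulo lam x = x - ⌊x / (2 * lam) + 1 / 2⌋ * (2 * lam) := by
  rw [centeredModulo, Int.fract]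
  field_simp
  ring

theorem sawtooth_centeredModulo (b : ℕ) {lam : ℝ} (hlam : lam ≠ 0) (x : ℝ) :
    sawtooth (2 * lam / 2 ^ b) (centeredModulo lam x) = sawtooth (2 * lam / 2 ^ b) x := by
  have hcell : (⌊x / (2 * lam) + 1 / 2⌋ : ℝ) * (2 * lam)
      = ((⌊x / (2 * lam) + 1 / 2⌋ * 2 ^ b : ℤ) : ℝ) * (2 * lam / 2 ^ b) := by
    push_cast
    field_simp
  rw [centeredModulo_eq_sub hlam, hcell, (sawtooth_periodic _).sub_int_mul_eq]

theorem centeredModulo_sub_midriseQ (b : ℕ) {lam : ℝ} (hlam : lam ≠ 0) (x : ℝ) :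
    centeredModulo lam x - midriseQ b lam (centeredModulo lam x)
      = sawtooth (2 * lam / 2 ^ b) x := by
  rw [sub_midriseQ b hlam, sawtooth_centeredModulo b hlam]

theorem modulo_adc_sqnr_gain_uniform_general {Ωs : Type*} [MeasurableSpace Ωs]
    (ℙ : Measure Ωs)
    (lam β ζ : ℝ) (hlam : 0 < lam) (N : ℕ) (hN : 0 < N)
    (hβ : β = N * lam) (hζ : ζ = lam / β)
    (b : ℕ)
    (X : Ωs → ℝ) (hX : pdf.IsUniform X (Set.Ico (-β) β) ℙ) :
    (∫ ω, (centeredModulo lam (X ω) - midriseQ b lam (centeredModulo lam (X ω))) ^ 2 ∂ℙ)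
        = lam ^ 2 / 3 * ((2 : ℝ) ^ (2 * b))⁻¹ ∧
    (∫ ω, (centeredModulo lam (X ω) - midriseQ b lam (centeredModulo lam (X ω))) ^ 2 ∂ℙ)
        = ζ ^ 2 * (β ^ 2 / 3 * ((2 : ℝ) ^ (2 * b))⁻¹) ∧
    (β ^ 2 / 3) /
        (∫ ω, (centeredModulo lam (X ω) - midriseQ b lam (centeredModulo lam (X ω))) ^ 2 ∂ℙ)
        = (2 : ℝ) ^ (2 * b) / ζ ^ 2 := by
  have hcells :
      Set.Ico (-β) β = Set.Ico (-β) (-β + ((N * 2 ^ b : ℕ) : ℝ) * (2 * lam / 2 ^ b)) := by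
    congr 1; rw [hβ]; push_cast; field_simp; ring
  have hmse : ∫ ω, (centeredModulo lam (X ω) - midriseQ b lam (centeredModulo lam (X ω))) ^ 2 ∂ℙ
      = lam ^ 2 / 3 * ((2 : ℝ) ^ (2 * b))⁻¹ := by
    rw [hcells] at hX
    simp only [centeredModulo_sub_midriseQ b hlam.ne']
    rw [integral_sawtooth_sq_of_isUniform (by positivity) (Nat.mul_pos hN (Nat.two_pow_pos b)) hX,
      mul_comm 2 b, pow_mul]
    field_simp
    ring
  have hζ' : ζ = 1 / N := by rw [hζ, hβ]; field_simp
  have hN' : (N : ℝ) ≠ 0 := by positivity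
  refine ⟨hmse, ?_, ?_⟩ <;> rw [hmse, hζ', hβ] <;> field_simp

/-- SQNR gain of the modulo ADC for a uniform source. -/
theorem modulo_adc_sqnr_gain_uniform {Ωs : Type*} [MeasurableSpace Ωs]
    (ℙ : Measure Ωs) [IsProbabilityMeasure ℙ]
    (lam β ζ : ℝ) (hlam : 0 < lam) (N : ℕ) (hN : 0 < N)
    (hβ : β = N * lam) (hζ : ζ = lam / β)
    (b : ℕ) (hb : 1 ≤ b)
    (X : Ωs → ℝ) (hX : pdf.IsUniform X (Set.Ico (-β) β) ℙ) :
    (∫ ω, (centeredModulo lam (X ω) - midriseQ b lam (centeredModulo lam (X ω))) ^ 2 ∂ℙ)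
        = lam ^ 2 / 3 * ((2 : ℝ) ^ (2 * b))⁻¹ ∧
    (∫ ω, (centeredModulo lam (X ω) - midriseQ b lam (centeredModulo lam (X ω))) ^ 2 ∂ℙ)
        = ζ ^ 2 * (β ^ 2 / 3 * ((2 : ℝ) ^ (2 * b))⁻¹) ∧
    (β ^ 2 / 3) /
        (∫ ω, (centeredModulo lam (X ω) - midriseQ b lam (centeredModulo lam (X ω))) ^ 2 ∂ℙ)
        = (2 : ℝ) ^ (2 * b) / ζ ^ 2 :=
  modulo_adc_sqnr_gain_uniform_general ℙ lam β ζ hlam N hN hβ hζ b X hX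
end
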